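/- Let L/K be an extension of G-graded fields and {A_i} a nonempty collection of graded subrings of K, each integrally closed in K in the graded sense. If B_i denotes the graded integral closure of A_i in L, then ∩_i B_i coincides with the graded integral closure of ∩_i A_i in L. -/

import Mathlib

universe u v

/-- A `G`-graded commutative ring structure on `A`: graded pieces `deg g`,
multiplicativity of the grading, and an internal direct sum decomposition
recorded by the homogeneous-component function `comp`. -/
structure GradedStr (G : Type u) [CommGroup G] (A : Type v) [CommRing A] where
  deg : G → AddSubgroup A
  one_mem : (1 : A) ∈ deg 1
  mul_mem : ∀ {g h : G} {a b : A}, a ∈ deg g → b ∈ deg h → a * b ∈ deg (g * h)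
  comp : A → G → A
  comp_mem : ∀ a g, comp a g ∈ deg g
  comp_add : ∀ a b g, comp (a + b) g = comp a g + comp b g
  comp_of_mem : ∀ {a : A} {g : G}, a ∈ deg g → comp a g = a
  comp_of_mem_ne : ∀ {a : A} {g g' : G}, a ∈ deg g → g' ≠ g → comp a g' = 0
  finite_support : ∀ a : A, (Function.support (comp a)).Finite
  sum_comp : ∀ a : A, ∑ᶠ g, comp a g = a

namespace GradedStr

variable {G : Type u} [CommGroup G] {A : Type v} [CommRing A]

/-- `a` is homogeneous: it lies in some graded piece. -/
def IsHomog (𝒜 : GradedStr G A) (a : A) : Prop := ∃ g, a ∈ 𝒜.deg g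

/-- A `G`-graded field: a nonzero graded ring in which every nonzero homogeneous
element is invertible. -/
def IsGradedField (𝒜 : GradedStr G A) : Prop :=
  Nontrivial A ∧ ∀ a : A, 𝒜.IsHomog a → a ≠ 0 → IsUnit a

/-- A graded subring: a subring stable under taking homogeneous components. -/
def IsGradedSubring (𝒜 : GradedStr G A) (S : Subring A) : Prop :=
  ∀ x ∈ S, ∀ g, 𝒜.comp x g ∈ S

/-- A graded subfield of a graded field: a graded subring containing the inverses of
its nonzero homogeneous elements. -/
def IsGradedSubfield (𝒜 : GradedStr G A) (S : Subring A) : Prop :=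
  𝒜.IsGradedSubring S ∧ ∀ x ∈ S, 𝒜.IsHomog x → x ≠ 0 → Ring.inverse x ∈ S

/-- The additive subgroup of homogeneous polynomials of grading `h` in `K[g₀⁻¹ T]`,
the polynomial ring in which `T` is declared homogeneous of grading `g₀`: the
coefficient of `T^n` must be homogeneous of grading `h * g₀⁻ⁿ`. -/
def polyDeg (𝒜 : GradedStr G A) (g₀ h : G) : AddSubgroup (Polynomial A) where
  carrier := {p | ∀ n : ℕ, p.coeff n ∈ 𝒜.deg (h * (g₀ ^ n)⁻¹)}
  zero_mem' := by intro n; simpa using (𝒜.deg (h * (g₀ ^ n)⁻¹)).zero_mem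
  add_mem' := by
    intro p q hp hq n
    rw [Polynomial.coeff_add]
    exact (𝒜.deg _).add_mem (hp n) (hq n)
  neg_mem' := by
    intro p hp n
    rw [Polynomial.coeff_neg]
    exact (𝒜.deg _).neg_mem (hp n)

/-- A homogeneous polynomial in `K[g₀⁻¹T]`. -/
def IsHomogPoly (𝒜 : GradedStr G A) (g₀ : G) (p : Polynomial A) : Prop :=
  ∃ h, p ∈ 𝒜.polyDeg g₀ h

/-- The graded fraction field of a graded subring of a graded field, computed inside
the ambient graded field: the subring generated by `S` together with the inverses of
the nonzero homogeneous elements of `S`. -/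
def fracIn (𝒜 : GradedStr G A) (S : Subring A) : Subring A :=
  Subring.closure (↑S ∪ {y : A | ∃ x ∈ S, x ≠ 0 ∧ 𝒜.IsHomog x ∧ y = Ring.inverse x})

end GradedStr

/-- `x` is integral over the subring `S` (satisfies a monic polynomial equation with
coefficients in `S`). -/
def IntegralOver {A : Type v} [CommRing A] (S : Subring A) (x : A) : Prop :=
  ∃ p : Polynomial A, p.Monic ∧ (∀ n, p.coeff n ∈ S) ∧ Polynomial.eval x p = 0

/-- Algebraic independence of a family of elements over a subring: the evaluation map
from the (multivariate) polynomial ring is injective.  (For homogeneous elements this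
is graded algebraic independence, the grading playing no role in injectivity.) -/
def AlgIndepOver {A : Type v} [CommRing A] {ι : Type*} (S : Subring A) (T : ι → A) : Prop :=
  Function.Injective (MvPolynomial.eval₂Hom S.subtype T)

/-- A graded valuation ring of the graded subfield `F` of the ambient graded field:
a graded subring `O ⊆ F` such that every nonzero homogeneous element `f` of `F`
satisfies `f ∈ O` or `f⁻¹ ∈ O`. -/
def IsGVRofSubfield {G : Type u} [CommGroup G] {A : Type v} [CommRing A]
    (𝒜 : GradedStr G A) (F : Subring A) (O : Subring A) : Prop :=
  O ≤ F ∧ 𝒜.IsGradedSubring O ∧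
    ∀ f ∈ F, f ≠ 0 → 𝒜.IsHomog f → f ∈ O ∨ Ring.inverse f ∈ O

/-! The inclusion `⊆` is monotonicity of integrality. Conversely, let `x` be homogeneous of
grading `g` and integral over every `A i`, and let `q` be a monic polynomial over `K` of least
degree that vanishes at `x` and is homogeneous when the variable is given grading `g`. Because
`K` is a graded field, `q` divides every polynomial over `K` vanishing at `x`: each homogeneous
component of the remainder vanishes at `x`, and dividing by its (homogeneous, hence invertible)
leading coefficient would contradict the minimality of `q`. So `q` divides an integral equation
of `x` over each `A i`, and by Kronecker's theorem its coefficients are integral over `A i`.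
They are homogeneous elements of `K`, so they lie in `A i`, which is integrally closed in `K`. -/

open Polynomial

section IntegralOver

variable {L : Type*} [CommRing L] {S : Subring L}

lemma mem_lifts_subtype_iff {p : L[X]} : p ∈ lifts S.subtype ↔ ∀ n, p.coeff n ∈ S := by
  simp [lifts_iff_coeff_lifts]

lemma integralOver_iff_isIntegral {x : L} : IntegralOver S x ↔ IsIntegral S x := by
  constructor
  · rintro ⟨p, hpm, hpS, hpx⟩
    obtain ⟨q, rfl, -, hqm⟩ := lifts_and_natDegree_eq_and_monic (mem_lifts_subtype_iff.2 hpS) hpm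
    exact ⟨q, hqm, by rwa [eval_map] at hpx⟩
  · rintro ⟨q, hqm, hqx⟩
    exact ⟨q.map S.subtype, hqm.map _, fun n => by simp, by rwa [eval_map]⟩

lemma IntegralOver.mono {T : Subring L} (hST : S ≤ T) {x : L} (hx : IntegralOver S x) :
    IntegralOver T x :=
  let ⟨p, hpm, hpS, hpx⟩ := hx
  ⟨p, hpm, fun n => hST (hpS n), hpx⟩

lemma integralOver_zero : IntegralOver S 0 :=
  integralOver_iff_isIntegral.2 isIntegral_zero

lemma coeff_modByMonic_mem {p q : L[X]} (hq : q.Monic) (hpS : ∀ n, p.coeff n ∈ S)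
    (hqS : ∀ n, q.coeff n ∈ S) (n : ℕ) : (p %ₘ q).coeff n ∈ S := by
  obtain ⟨p', rfl⟩ := mem_lifts_subtype_iff.2 hpS
  obtain ⟨q', rfl, -, hq'⟩ := lifts_and_natDegree_eq_and_monic (mem_lifts_subtype_iff.2 hqS) hq
  rw [coe_mapRingHom, ← map_modByMonic _ hq', coeff_map]
  exact SetLike.coe_mem _

lemma integralOver_coeff_of_dvd {p q : L[X]} (hpm : p.Monic) (hpS : ∀ n, p.coeff n ∈ S)
    (hqm : q.Monic) (hqp : q ∣ p) (n : ℕ) : IntegralOver S (q.coeff n) := by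
  obtain ⟨p', rfl, -, hp'⟩ := lifts_and_natDegree_eq_and_monic (mem_lifts_subtype_iff.2 hpS) hpm
  exact integralOver_iff_isIntegral.2 (isIntegral_coeff_of_dvd p' q hp' hqm hqp n)

end IntegralOver

namespace GradedStr

variable {G : Type*} [CommGroup G] {A : Type*} [CommRing A] (𝒜 : GradedStr G A)

lemma comp_zero (g : G) : 𝒜.comp 0 g = 0 := by
  simpa using 𝒜.comp_add 0 0 g

def compHom (g : G) : A →+ A where
  toFun a := 𝒜.comp a g
  map_zero' := 𝒜.comp_zero g
  map_add' a b := 𝒜.comp_add a b g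

lemma eq_comp_of_forall_ne {a : A} {g : G} (h : ∀ g', g' ≠ g → 𝒜.comp a g' = 0) :
    a = 𝒜.comp a g :=
  (𝒜.sum_comp a).symm.trans (finsum_eq_single _ g h)

lemma eq_zero_of_forall_comp_eq_zero {a : A} (h : ∀ g, 𝒜.comp a g = 0) : a = 0 := by
  rw [← 𝒜.sum_comp a, funext h, finsum_zero]

lemma comp_mul_of_mem {u : A} {g : G} (hu : u ∈ 𝒜.deg g) (a : A) (h : G) :
    𝒜.comp (a * u) h = 𝒜.comp a (h * g⁻¹) * u := by
  have hsplit : a * u = ∑ᶠ k, 𝒜.comp a k * u := by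
    rw [← finsum_mul' _ _ (𝒜.finite_support a), 𝒜.sum_comp]
  have hsupp : (Function.support fun k => 𝒜.comp a k * u).Finite :=
    (𝒜.finite_support a).subset fun k hk => left_ne_zero_of_mul hk
  change 𝒜.compHom h (a * u) = _
  rw [hsplit, (𝒜.compHom h).map_finsum hsupp]
  calc ∑ᶠ k, 𝒜.compHom h (𝒜.comp a k * u)
      = 𝒜.compHom h (𝒜.comp a (h * g⁻¹) * u) := by
        refine finsum_eq_single _ _ fun k hk => 𝒜.comp_of_mem_ne (𝒜.mul_mem (𝒜.comp_mem a k) hu) ?_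
        rintro rfl
        exact hk (mul_inv_cancel_right k g).symm
    _ = 𝒜.comp a (h * g⁻¹) * u := by
        have hmem := 𝒜.mul_mem (𝒜.comp_mem a (h * g⁻¹)) hu
        rw [inv_mul_cancel_right] at hmem
        exact 𝒜.comp_of_mem hmem

lemma pow_mem_deg {x : A} {g : G} (hx : x ∈ 𝒜.deg g) (n : ℕ) : x ^ n ∈ 𝒜.deg (g ^ n) := by
  induction n with
  | zero => simpa using 𝒜.one_mem
  | succ n ih => simpa only [pow_succ] using 𝒜.mul_mem ih hx

lemma inverse_mem_deg {a : A} {g : G} (ha : a ∈ 𝒜.deg g) (hu : IsUnit a) :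
    Ring.inverse a ∈ 𝒜.deg g⁻¹ := by
  suffices h : ∀ k, k ≠ g⁻¹ → 𝒜.comp (Ring.inverse a) k = 0 from
    𝒜.eq_comp_of_forall_ne h ▸ 𝒜.comp_mem _ _
  intro k hk
  have h := 𝒜.comp_mul_of_mem ha (Ring.inverse a) (k * g)
  rw [Ring.inverse_mul_cancel a hu, mul_inv_cancel_right,
    𝒜.comp_of_mem_ne 𝒜.one_mem fun e => hk (eq_inv_of_mul_eq_one_left e)] at h
  exact (hu.mul_left_eq_zero).1 h.symm

lemma integralOver_comp_of_mem {S : Subring A} {a : A} {g : G} (ha : a ∈ 𝒜.deg g)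
    (hS : IntegralOver S a) (g' : G) : IntegralOver S (𝒜.comp a g') := by
  obtain rfl | hg := eq_or_ne g' g
  · rwa [𝒜.comp_of_mem ha]
  · rw [𝒜.comp_of_mem_ne ha hg]
    exact integralOver_zero

/-- The component of grading `h` of a polynomial whose variable has grading `g`. -/
noncomputable def polyComp (g : G) (p : A[X]) (h : G) : A[X] :=
  ∑ n ∈ p.support, monomial n (𝒜.comp (p.coeff n) (h * (g ^ n)⁻¹))

lemma coeff_polyComp (g : G) (p : A[X]) (h : G) (n : ℕ) :
    (𝒜.polyComp g p h).coeff n = 𝒜.comp (p.coeff n) (h * (g ^ n)⁻¹) := by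
  simp only [polyComp, finsetSum_coeff, coeff_monomial, Finset.sum_ite_eq']
  split_ifs with hn
  · rfl
  · rw [notMem_support_iff.1 hn, comp_zero]

lemma polyComp_mem_polyDeg (g : G) (p : A[X]) (h : G) : 𝒜.polyComp g p h ∈ 𝒜.polyDeg g h :=
  fun n => 𝒜.coeff_polyComp g p h n ▸ 𝒜.comp_mem _ _

lemma natDegree_polyComp_le (g : G) (p : A[X]) (h : G) :
    (𝒜.polyComp g p h).natDegree ≤ p.natDegree :=
  natDegree_le_iff_coeff_eq_zero.2 fun n hn => by
    rw [coeff_polyComp, coeff_eq_zero_of_natDegree_lt hn, comp_zero]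

lemma eval_polyComp {x : A} {g : G} (hx : x ∈ 𝒜.deg g) (p : A[X]) (h : G) :
    (𝒜.polyComp g p h).eval x = 𝒜.comp (p.eval x) h := by
  rw [polyComp, eval_finsetSum, eval_eq_sum, sum_def]
  change _ = 𝒜.compHom h _
  rw [map_sum]
  refine Finset.sum_congr rfl fun n _ => ?_
  rw [eval_monomial]
  exact (𝒜.comp_mul_of_mem (𝒜.pow_mem_deg hx n) _ h).symm

lemma eq_zero_of_forall_polyComp_eq_zero {g : G} {p : A[X]} (hp : ∀ h, 𝒜.polyComp g p h = 0) :
    p = 0 := by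
  ext n
  refine 𝒜.eq_zero_of_forall_comp_eq_zero fun h => ?_
  simpa [coeff_polyComp] using congr_arg (coeff · n) (hp (h * g ^ n))

structure IsHomogAnnihilator (K : Subring A) (g : G) (x : A) (q : A[X]) : Prop where
  monic : q.Monic
  coeff_mem : ∀ n, q.coeff n ∈ K
  mem_polyDeg : q ∈ 𝒜.polyDeg g (g ^ q.natDegree)
  eval_eq_zero : q.eval x = 0

variable {𝒜}

lemma isHomogAnnihilator_polyComp [Nontrivial A] {K : Subring A} (hK : 𝒜.IsGradedSubring K)
    {x : A} {g : G} (hx : x ∈ 𝒜.deg g) {p : A[X]} (hpm : p.Monic) (hpK : ∀ n, p.coeff n ∈ K)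
    (hpx : p.eval x = 0) : 𝒜.IsHomogAnnihilator K g x (𝒜.polyComp g p (g ^ p.natDegree)) := by
  have hlead : (𝒜.polyComp g p (g ^ p.natDegree)).coeff p.natDegree = 1 := by
    rw [coeff_polyComp, mul_inv_cancel, hpm.coeff_natDegree, 𝒜.comp_of_mem 𝒜.one_mem]
  have hdeg : (𝒜.polyComp g p (g ^ p.natDegree)).natDegree = p.natDegree :=
    natDegree_eq_of_le_of_coeff_ne_zero (𝒜.natDegree_polyComp_le _ _ _) (hlead ▸ one_ne_zero)
  refine ⟨monic_of_natDegree_le_of_coeff_eq_one _ hdeg.le hlead,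
    fun n => 𝒜.coeff_polyComp .. ▸ hK _ (hpK n) _, ?_, ?_⟩
  · rw [hdeg]
    exact 𝒜.polyComp_mem_polyDeg _ _ _
  rw [𝒜.eval_polyComp hx, hpx, comp_zero]

lemma exists_isHomogAnnihilator_of_ne_zero (hL : 𝒜.IsGradedField) {K : Subring A}
    (hK : 𝒜.IsGradedSubfield K) {x : A} {g h : G} {r : A[X]} (hr : r ∈ 𝒜.polyDeg g h)
    (hrK : ∀ n, r.coeff n ∈ K) (hr0 : r ≠ 0) (hrx : r.eval x = 0) :
    ∃ q, 𝒜.IsHomogAnnihilator K g x q ∧ q.natDegree = r.natDegree := by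
  have hlead : r.leadingCoeff ∈ 𝒜.deg (h * (g ^ r.natDegree)⁻¹) := hr _
  have hlead0 : r.leadingCoeff ≠ 0 := leadingCoeff_ne_zero.2 hr0
  have hu : IsUnit r.leadingCoeff := hL.2 _ ⟨_, hlead⟩ hlead0
  have hinv : Ring.inverse r.leadingCoeff * r.leadingCoeff = 1 := Ring.inverse_mul_cancel _ hu
  have hdeg : (C (Ring.inverse r.leadingCoeff) * r).natDegree = r.natDegree :=
    natDegree_C_mul_eq_of_mul_eq_one (Ring.mul_inverse_cancel _ hu)
  refine ⟨C (Ring.inverse r.leadingCoeff) * r, ⟨monic_C_mul_of_mul_leadingCoeff_eq_one hinv,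
    fun n => ?_, fun n => ?_, by rw [eval_mul, hrx, mul_zero]⟩, hdeg⟩
  · rw [coeff_C_mul]
    exact K.mul_mem (hK.2 _ (hrK _) ⟨_, hlead⟩ hlead0) (hrK n)
  · rw [coeff_C_mul, hdeg]
    convert 𝒜.mul_mem (𝒜.inverse_mem_deg hlead hu) (hr n) using 2
    group

lemma eq_zero_of_natDegree_lt_of_forall_isHomogAnnihilator (hL : 𝒜.IsGradedField)
    {K : Subring A} (hK : 𝒜.IsGradedSubfield K) {x : A} {g : G} (hx : x ∈ 𝒜.deg g) {d : ℕ}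
    (hmin : ∀ q, 𝒜.IsHomogAnnihilator K g x q → d ≤ q.natDegree) {r : A[X]}
    (hrK : ∀ n, r.coeff n ∈ K) (hrx : r.eval x = 0) (hrd : r.natDegree < d) : r = 0 := by
  refine 𝒜.eq_zero_of_forall_polyComp_eq_zero (g := g) fun h => ?_
  by_contra hr0
  obtain ⟨q, hq, hqd⟩ := exists_isHomogAnnihilator_of_ne_zero hL hK (𝒜.polyComp_mem_polyDeg g r h)
    (fun n => 𝒜.coeff_polyComp .. ▸ hK.1 _ (hrK n) _) hr0
    (by rw [𝒜.eval_polyComp hx, hrx, comp_zero])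
  have := 𝒜.natDegree_polyComp_le g r h
  have := hmin q hq
  omega

lemma exists_isHomogAnnihilator_dvd (hL : 𝒜.IsGradedField) {K : Subring A}
    (hK : 𝒜.IsGradedSubfield K) {x : A} {g : G} (hx : x ∈ 𝒜.deg g) {p : A[X]} (hpm : p.Monic)
    (hpK : ∀ n, p.coeff n ∈ K) (hpx : p.eval x = 0) :
    ∃ q, 𝒜.IsHomogAnnihilator K g x q ∧
      ∀ p' : A[X], (∀ n, p'.coeff n ∈ K) → p'.eval x = 0 → q ∣ p' := by
  have := hL.1
  obtain ⟨q, hq, hmin⟩ := (measure fun q : A[X] => q.natDegree).wf.has_min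
    {q | 𝒜.IsHomogAnnihilator K g x q} ⟨_, isHomogAnnihilator_polyComp hK.1 hx hpm hpK hpx⟩
  refine ⟨q, hq, fun p' hp'K hp'x => (modByMonic_eq_zero_iff_dvd hq.monic).1 ?_⟩
  have hq1 : q ≠ 1 := by
    rintro rfl
    simpa using hq.eval_eq_zero
  refine eq_zero_of_natDegree_lt_of_forall_isHomogAnnihilator hL hK hx
    (fun q' hq' => not_lt.1 (hmin q' hq')) (coeff_modByMonic_mem hq.monic hp'K hq.coeff_mem) ?_
    (natDegree_modByMonic_lt p' hq.monic hq1)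
  rw [modByMonic_eq_sub_mul_div p' q, eval_sub, eval_mul, hp'x, hq.eval_eq_zero, zero_mul, sub_zero]

end GradedStr

open GradedStr

lemma integralOver_iInf_of_mem_deg {G : Type*} [CommGroup G] {L : Type*} [CommRing L]
    {ℬ : GradedStr G L} (hL : ℬ.IsGradedField) {K : Subring L} (hK : ℬ.IsGradedSubfield K)
    {ι : Type*} [Nonempty ι] {A : ι → Subring L} (hAK : ∀ i, A i ≤ K)
    (hAic : ∀ i, ∀ z ∈ K, (∀ g, IntegralOver (A i) (ℬ.comp z g)) → z ∈ A i)
    {x : L} {g : G} (hx : x ∈ ℬ.deg g) (hxA : ∀ i, IntegralOver (A i) x) :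
    IntegralOver (⨅ i, A i) x := by
  obtain ⟨i₀⟩ := ‹Nonempty ι›
  obtain ⟨p₀, hp₀m, hp₀A, hp₀x⟩ := hxA i₀
  obtain ⟨q, hq, hqdvd⟩ :=
    exists_isHomogAnnihilator_dvd hL hK hx hp₀m (fun n => hAK i₀ (hp₀A n)) hp₀x
  refine ⟨q, hq.monic, fun n => Subring.mem_iInf.2 fun i => ?_, hq.eval_eq_zero⟩
  obtain ⟨p, hpm, hpA, hpx⟩ := hxA i
  have hqA : IntegralOver (A i) (q.coeff n) :=
    integralOver_coeff_of_dvd hpm hpA hq.monic (hqdvd p (fun n => hAK i (hpA n)) hpx) n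
  exact hAic i _ (hq.coeff_mem n) (ℬ.integralOver_comp_of_mem (hq.mem_polyDeg n) hqA)

theorem inter_graded_integral_closures_general
    {G : Type u} [CommGroup G] {L : Type v} [CommRing L]
    (ℬ : GradedStr G L) (hL : ℬ.IsGradedField)
    (K : Subring L) (hK : ℬ.IsGradedSubfield K)
    {ι : Type v} [Nonempty ι] (A : ι → Subring L)
    (hAK : ∀ i, A i ≤ K)
    (hAic : ∀ i, ∀ z ∈ K, (∀ g, IntegralOver (A i) (ℬ.comp z g)) → z ∈ A i) :
    (⋂ i, {z : L | ∀ g, IntegralOver (A i) (ℬ.comp z g)})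
      = {z : L | ∀ g, IntegralOver (⨅ i, A i) (ℬ.comp z g)} := by
  ext z
  simp only [Set.mem_iInter, Set.mem_ofPred_eq]
  exact ⟨fun hz g => integralOver_iInf_of_mem_deg hL hK hAK hAic (ℬ.comp_mem z g) (hz · g),
    fun hz i g => (hz g).mono (iInf_le A i)⟩

/-- Let `L/K` be an extension of `G`-graded fields (realized as a
graded subfield `K` of the graded field `L`) and `{A_i}` a nonempty collection of
graded subrings of `K`, each integrally closed in `K` in the graded sense.  If `B_i`
denotes the graded integral closure of `A_i` in `L` (the set of elements all of whose
homogeneous components are integral over `A_i`), then `⋂ B_i` coincides with the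
graded integral closure of `⋂ A_i` in `L`. -/
theorem inter_graded_integral_closures
    {G : Type u} [CommGroup G] {L : Type v} [CommRing L]
    (ℬ : GradedStr G L) (hL : ℬ.IsGradedField)
    (K : Subring L) (hK : ℬ.IsGradedSubfield K)
    {ι : Type v} [Nonempty ι] (A : ι → Subring L)
    (hAK : ∀ i, A i ≤ K)
    (hAgr : ∀ i, ℬ.IsGradedSubring (A i))
    (hAic : ∀ i, ∀ z ∈ K, (∀ g, IntegralOver (A i) (ℬ.comp z g)) → z ∈ A i) :
    (⋂ i, {z : L | ∀ g, IntegralOver (A i) (ℬ.comp z g)})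
      = {z : L | ∀ g, IntegralOver (⨅ i, A i) (ℬ.comp z g)} :=
  inter_graded_integral_closures_general ℬ hL K hK A hAK hAic
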